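/- arXiv:1704.07580 — 3 statements merged into one kernel-verified Lean document; each statement's English description precedes it below -/
import Mathlib

section
/- Let f₁,…,fₘ : ℝ → ℝ be functions of the form fⱼ(s) = yⱼ − vⱼ·s restricted to intervals [0, Tⱼ] with vⱼ > 0 (line segments all starting on the vertical line s = 0). Then the lower envelope of these m segments, as a function of s, has at most 2m − 1 maximal pieces, i.e., the partition of the domain into maximal intervals on which the minimum is attained by a fixed segment has at most 2m − 1 parts. -/
/-- The segment `s ↦ y − v·s` restricted to `[0, T]`, with value `⊤` (i.e. `+∞`)
outside its interval, as a function into `EReal`. -/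
noncomputable def seg (y v T : ℝ) (s : ℝ) : EReal :=
  if 0 ≤ s ∧ s ≤ T then ((y - v * s : ℝ) : EReal) else ⊤

/-- Davenport–Schinzel order 2 counting lemma: a sequence over `m` symbols with no
immediate repetition and no `b a b a` alternation has length at most `2m − 1`. -/
lemma ds2 {m k : ℕ} (σ : Fin k → Fin m)
    (hne : ∀ i : Fin k, ∀ h : i.1 + 1 < k, σ i ≠ σ ⟨i.1 + 1, h⟩)
    (hds : ∀ q i r p : Fin k, q < i → i < r → r < p →
      σ q = σ r → σ i = σ p → σ q ≠ σ i → False) :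
    k ≤ 2 * m - 1 := by
  classical
  rcases Nat.eq_zero_or_pos k with rfl | hk
  · exact Nat.zero_le _
  have hm : 0 < m := (σ ⟨0, hk⟩).pos
  rcases Nat.lt_or_ge k 2 with hk2 | hk2
  · omega
  set z : Fin k := ⟨0, hk⟩ with hz
  set e : Fin k := ⟨k - 1, by omega⟩ with he
  set Last : Fin k → Prop := fun a => ∀ j, a < j → σ j ≠ σ a with hLast
  -- if `a` is not a last occurrence, then position `a+1` is a first occurrence
  have key1 : ∀ (a : Fin k) (h : a.1 + 1 < k), ¬ Last a →
      ∀ j : Fin k, j < ⟨a.1 + 1, h⟩ → σ j ≠ σ ⟨a.1 + 1, h⟩ := by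
    intro a h hL j hj hEq
    have hL2 : ∃ p, a < p ∧ σ p = σ a := by
      by_contra hc
      push_neg at hc
      exact hL (fun j hj => hc j hj)
    obtain ⟨p, hap, hp⟩ := hL2
    set a' : Fin k := ⟨a.1 + 1, h⟩ with ha'
    have hne' : σ a ≠ σ a' := hne a h
    have hpne : p ≠ a' := by
      intro hh
      apply hne'
      rw [← hh, hp]
    have hpa : a' < p := by
      have h1 : a.1 < p.1 := hap
      have h2 : p.1 ≠ a.1 + 1 := fun hh => hpne (Fin.ext hh)
      show a.1 + 1 < p.1
      omega
    have hja : j ≠ a := by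
      intro hh
      apply hne'
      rw [← hh, hEq]
    have hja' : j < a := by
      have h1 : j.1 < a.1 + 1 := hj
      have h2 : j.1 ≠ a.1 := fun hh => hja (Fin.ext hh)
      show j.1 < a.1
      omega
    exact hds j a a' p hja' (by show a.1 < a.1 + 1; omega) hpa hEq hp.symm
      (by rw [hEq]; exact fun hh => hne' hh.symm)
  have h1 : ∀ i : Fin (k - 1), i.1 < k := fun i => by have := i.isLt; omega
  have h2 : ∀ i : Fin (k - 1), i.1 + 1 < k := fun i => by have := i.isLt; omega
  set f : Fin (k - 1) → Fin m × Bool := fun i =>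
    if Last ⟨i.1, h1 i⟩ then (σ ⟨i.1, h1 i⟩, true) else (σ ⟨i.1 + 1, h2 i⟩, false)
    with hf
  have himg : ∀ i : Fin (k - 1),
      f i ∈ (Finset.univ.erase ((σ e, true) : Fin m × Bool)).erase (σ z, false) := by
    intro i
    simp only [hf]
    split_ifs with hP
    · refine Finset.mem_erase.2 ⟨by simp, Finset.mem_erase.2 ⟨?_, Finset.mem_univ _⟩⟩
      intro hh
      have hσ : σ (⟨i.1, h1 i⟩ : Fin k) = σ e := by
        have := congrArg Prod.fst hh
        exact this
      have hlt : (⟨i.1, h1 i⟩ : Fin k) < e := by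
        show i.1 < k - 1
        exact i.isLt
      exact hP e hlt hσ.symm
    · refine Finset.mem_erase.2 ⟨?_, Finset.mem_erase.2 ⟨by simp, Finset.mem_univ _⟩⟩
      intro hh
      have hσ : σ (⟨i.1 + 1, h2 i⟩ : Fin k) = σ z := by
        have := congrArg Prod.fst hh
        exact this
      have hlt : z < (⟨i.1 + 1, h2 i⟩ : Fin k) := by
        show 0 < i.1 + 1
        omega
      exact key1 ⟨i.1, h1 i⟩ (h2 i) hP z hlt hσ.symm
  have hinj : Set.InjOn f (Finset.univ : Finset (Fin (k - 1))) := by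
    intro i _ i' _ hii
    simp only [hf] at hii
    split_ifs at hii with hP hP' hP'
    · have hσ : σ (⟨i.1, h1 i⟩ : Fin k) = σ ⟨i'.1, h1 i'⟩ :=
        congrArg Prod.fst hii
      by_contra hne''
      rcases lt_trichotomy i.1 i'.1 with hlt | heq | hlt
      · exact hP ⟨i'.1, h1 i'⟩ hlt hσ.symm
      · exact hne'' (Fin.ext heq)
      · exact hP' ⟨i.1, h1 i⟩ hlt hσ
    · exact absurd (congrArg Prod.snd hii) (by simp)
    · exact absurd (congrArg Prod.snd hii) (by simp)
    · have hσ : σ (⟨i.1 + 1, h2 i⟩ : Fin k) = σ ⟨i'.1 + 1, h2 i'⟩ :=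
        congrArg Prod.fst hii
      by_contra hne''
      rcases lt_trichotomy i.1 i'.1 with hlt | heq | hlt
      · exact key1 ⟨i'.1, h1 i'⟩ (h2 i') hP' ⟨i.1 + 1, h2 i⟩
          (by show i.1 + 1 < i'.1 + 1; omega) hσ
      · exact hne'' (Fin.ext heq)
      · exact key1 ⟨i.1, h1 i⟩ (h2 i) hP ⟨i'.1 + 1, h2 i'⟩
          (by show i'.1 + 1 < i.1 + 1; omega) hσ.symm
  have hcard := Finset.card_le_card_of_injOn f (fun i _ => himg i) hinj
  have hzc : ((σ e, true) : Fin m × Bool) ≠ (σ z, false) := by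
    intro hh
    exact absurd (congrArg Prod.snd hh) (by simp)
  have hmem1 : ((σ e, true) : Fin m × Bool) ∈ (Finset.univ : Finset (Fin m × Bool)) :=
    Finset.mem_univ _
  have hmem2 : ((σ z, false) : Fin m × Bool) ∈
      Finset.univ.erase ((σ e, true) : Fin m × Bool) :=
    Finset.mem_erase.2 ⟨fun hh => hzc hh.symm, Finset.mem_univ _⟩
  rw [Finset.card_erase_of_mem hmem2, Finset.card_erase_of_mem hmem1] at hcard
  simp only [Finset.card_univ, Fintype.card_prod, Fintype.card_fin, Fintype.card_bool,
    Finset.card_fin] at hcard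
  omega

/-- the lower envelope of `m` segments `s ↦ yⱼ − vⱼ·s` on `[0,Tⱼ]`
(all starting on the vertical line `s = 0`) has at most `2m − 1` maximal pieces:
any increasing sequence of sample points at which the (unique, strict) envelope
minimizer changes from each point to the next has length at most `2m − 1`. -/
theorem stmt3 (m k : ℕ) (y v T : Fin m → ℝ) (hv : ∀ j, 0 < v j)
    (s : Fin k → ℝ) (hs : StrictMono s) (σ : Fin k → Fin m)
    (hmin : ∀ i : Fin k, ∀ j : Fin m, j ≠ σ i →
      seg (y (σ i)) (v (σ i)) (T (σ i)) (s i) < seg (y j) (v j) (T j) (s i))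
    (hchange : ∀ i : Fin k, ∀ h : i.1 + 1 < k, σ i ≠ σ ⟨i.1 + 1, h⟩) :
    k ≤ 2 * m - 1 := by
  apply ds2 σ hchange
  intro q i r p hqi hir hrp hqr hip hneq
  set a := σ i with ha
  set b := σ q with hb
  have hba : b ≠ a := hneq
  -- domain facts from strict minimality (value at minimizer is not ⊤)
  have hdom : ∀ (w : Fin k) (j : Fin m), j ≠ σ w → 0 ≤ s w ∧ s w ≤ T (σ w) := by
    intro w j hj
    by_contra hc
    have h := hmin w j hj
    rw [seg, if_neg hc] at h
    exact absurd h (not_lt.2 le_top)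
  have hdq : 0 ≤ s q ∧ s q ≤ T b := hdom q a (fun hh => hba hh.symm)
  have hdi : 0 ≤ s i ∧ s i ≤ T a := hdom i b hba
  have hdr : 0 ≤ s r ∧ s r ≤ T b := by
    have := hdom r a (by rw [← hqr]; exact fun hh => hba hh.symm)
    rwa [← hqr] at this
  have hdp : 0 ≤ s p ∧ s p ≤ T a := by
    have := hdom p b (by rw [← hip]; exact hba)
    rwa [← hip] at this
  have hsqi : s q < s i := hs hqi
  have hsir : s i < s r := hs hir
  have hsrp : s r < s p := hs hrp
  -- intermediate points lie in both domains
  have hqa : 0 ≤ s q ∧ s q ≤ T a := ⟨hdq.1, le_trans (le_of_lt hsqi) hdi.2⟩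
  have hib : 0 ≤ s i ∧ s i ≤ T b := ⟨hdi.1, le_trans (le_of_lt hsir) hdr.2⟩
  have hra : 0 ≤ s r ∧ s r ≤ T a := ⟨hdr.1, le_trans (le_of_lt hsrp) hdp.2⟩
  -- real-valued strict inequalities at the three points
  have H1 : y b - v b * s q < y a - v a * s q := by
    have h := hmin q a (fun hh => hba hh.symm)
    rw [seg, seg, if_pos hdq, if_pos hqa] at h
    exact_mod_cast h
  have H2 : y a - v a * s i < y b - v b * s i := by
    have h := hmin i b hba
    rw [seg, seg, if_pos hdi, if_pos hib] at h
    exact_mod_cast h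
  have H3 : y b - v b * s r < y a - v a * s r := by
    have h := hmin r a (by rw [← hqr]; exact fun hh => hba hh.symm)
    rw [seg, seg, ← hqr, if_pos hdr, if_pos hra] at h
    exact_mod_cast h
  -- an affine function cannot change sign twice
  nlinarith [mul_pos (sub_pos.2 hsqi) (sub_pos.2 hsir),
    mul_pos (sub_pos.2 hsir) (sub_pos.2 hsrp),
    mul_pos (sub_pos.2 hsqi) (sub_pos.2 hsrp)]
end

section
/- Let D₁,…,D₂ₙ be growing disks where for 1 ≤ i ≤ n, disk Dᵢ is centered at (2i, 0) with growth rate 1, and disk D_{n+i} is centered at (2i, 1) with growth rate v_{n+i} > 1. Then for each 1 ≤ i ≤ n, disk D_{n+i} is eliminated by disk Dᵢ at time t_{n+i} = 1/(1 + v_{n+i}) < 1/2, and every Dᵢ with i ≤ n survives until time 1/2; consequently the elimination order of D_{n+1},…,D_{2n} lists the rates v_{n+1},…,v_{2n} in decreasing order. -/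
open scoped Classical

/-- The elimination-time recursion for growing disks. -/
def ElimSpec (t : ℕ → ℕ → ℝ) (el : ℕ → EReal) : Prop :=
  ∀ i, el i =
    ((Finset.Ico 1 i).filter (fun j => ((t i j : ℝ) : EReal) ≤ el j)).inf
      (fun j => ((t i j : ℝ) : EReal))

/-!
Low disks are pairwise at distance at least `2` and have rate `1`, so none of them dies before
time `1`. The high disk `D_{n+i}` is at distance `1` from `Dᵢ` and at distance at least `1` from
every low disk, so among the low disks `Dᵢ` reaches it first, at time `1 / (1 + v_{n+i})`. An
earlier high disk `D_{n+k}`, at distance at least `2`, can only reach `D_{n+i}` before its own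
death time `1 / (1 + v_{n+k})` if `v_{n+i} ≥ v_{n+k} + 2`, and then `Dᵢ` is earlier still; this
is where strong induction on `i` enters.
-/

namespace ElimSpec

variable {t : ℕ → ℕ → ℝ} {el : ℕ → EReal}

theorem coe_le_of_forall (hel : ElimSpec t el) {i : ℕ} {b : ℝ}
    (h : ∀ j, 1 ≤ j → j < i → (t i j : EReal) ≤ el j → b ≤ t i j) : (b : EReal) ≤ el i := by
  rw [hel i]
  refine Finset.le_inf fun j hj => ?_
  simp only [Finset.mem_filter, Finset.mem_Ico] at hj
  exact EReal.coe_le_coe (h j hj.1.1 hj.1.2 hj.2)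

theorem le_of_touch (hel : ElimSpec t el) {i j : ℕ} (hj : 1 ≤ j) (hji : j < i)
    (h : (t i j : EReal) ≤ el j) : el i ≤ t i j := by
  rw [hel i]
  exact Finset.inf_le (Finset.mem_filter.2 ⟨Finset.mem_Ico.2 ⟨hj, hji⟩, h⟩)

end ElimSpec

theorem Complex.abs_re_sub_le_dist (z w : ℂ) : |z.re - w.re| ≤ dist z w := by
  simpa [Complex.dist_eq] using Complex.abs_re_le_norm (z - w)

theorem Complex.abs_im_sub_le_dist (z w : ℂ) : |z.im - w.im| ≤ dist z w := by
  simpa [Complex.dist_eq] using Complex.abs_im_le_norm (z - w)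

/-- Here `a`, `b`, `d` stand for `v_{n+i}`, `v_{n+k}` and the distance between the two high
disks. -/
theorem one_div_one_add_le_of_div_le {a b d : ℝ} (ha : 0 < a) (hb : 0 ≤ b) (hd : 2 ≤ d)
    (h : d / (a + b) ≤ 1 / (1 + b)) : 1 / (1 + a) ≤ d / (a + b) := by
  rw [div_le_div_iff₀ (by linarith) (by linarith)] at h
  rw [div_le_div_iff₀ (by linarith) (by linarith)]
  nlinarith

theorem two_le_dist_of_re_eq_two_mul {z w : ℂ} {i j : ℕ} (hz : z.re = 2 * i) (hw : w.re = 2 * j)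
    (hji : j < i) : 2 ≤ dist z w := by
  have : (j : ℝ) + 1 ≤ i := by exact_mod_cast hji
  refine le_trans ?_ (Complex.abs_re_sub_le_dist z w)
  rw [hz, hw, abs_of_nonneg (by linarith)]
  linarith

structure SortingGadget (n : ℕ) (p : ℕ → ℂ) (v : ℕ → ℝ) : Prop where
  low_center : ∀ i, 1 ≤ i → i ≤ n → p i = ((2 * i : ℝ) : ℂ)
  high_center : ∀ i, 1 ≤ i → i ≤ n → p (n + i) = ((2 * i : ℝ) : ℂ) + Complex.I
  low_rate : ∀ i, 1 ≤ i → i ≤ n → v i = 1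
  one_lt_high_rate : ∀ i, 1 ≤ i → i ≤ n → 1 < v (n + i)

namespace SortingGadget

variable {n : ℕ} {p : ℕ → ℂ} {v : ℕ → ℝ} {el : ℕ → EReal}

theorem low_re (h : SortingGadget n p v) {i : ℕ} (hi : 1 ≤ i) (hin : i ≤ n) :
    (p i).re = 2 * i := by
  simp [h.low_center i hi hin]

theorem low_im (h : SortingGadget n p v) {i : ℕ} (hi : 1 ≤ i) (hin : i ≤ n) : (p i).im = 0 := by
  simp [h.low_center i hi hin]

theorem high_re (h : SortingGadget n p v) {i : ℕ} (hi : 1 ≤ i) (hin : i ≤ n) :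
    (p (n + i)).re = 2 * i := by
  simp [h.high_center i hi hin]

theorem high_im (h : SortingGadget n p v) {i : ℕ} (hi : 1 ≤ i) (hin : i ≤ n) :
    (p (n + i)).im = 1 := by
  simp [h.high_center i hi hin]

theorem two_le_dist_low_low (h : SortingGadget n p v) {i j : ℕ} (hj : 1 ≤ j) (hji : j < i)
    (hin : i ≤ n) : 2 ≤ dist (p i) (p j) :=
  two_le_dist_of_re_eq_two_mul (h.low_re (by omega) hin) (h.low_re hj (by omega)) hji

theorem two_le_dist_high_high (h : SortingGadget n p v) {i k : ℕ} (hk : 1 ≤ k) (hki : k < i)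
    (hin : i ≤ n) : 2 ≤ dist (p (n + i)) (p (n + k)) :=
  two_le_dist_of_re_eq_two_mul (h.high_re (by omega) hin) (h.high_re hk (by omega)) hki

theorem one_le_dist_high_low (h : SortingGadget n p v) {i j : ℕ} (hi : 1 ≤ i) (hin : i ≤ n)
    (hj : 1 ≤ j) (hjn : j ≤ n) : 1 ≤ dist (p (n + i)) (p j) := by
  simpa [h.high_im hi hin, h.low_im hj hjn] using Complex.abs_im_sub_le_dist (p (n + i)) (p j)

theorem dist_high_low_self (h : SortingGadget n p v) {i : ℕ} (hi : 1 ≤ i) (hin : i ≤ n) :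
    dist (p (n + i)) (p i) = 1 := by
  rw [Complex.dist_of_re_eq (by rw [h.high_re hi hin, h.low_re hi hin]),
    h.high_im hi hin, h.low_im hi hin]
  simp

theorem one_le_elim_low (h : SortingGadget n p v)
    (hel : ElimSpec (fun i j => dist (p i) (p j) / (v i + v j)) el) {i : ℕ} (hi : 1 ≤ i)
    (hin : i ≤ n) : ((1 : ℝ) : EReal) ≤ el i :=
  hel.coe_le_of_forall fun j hj hji _ => by
    rw [h.low_rate i hi hin, h.low_rate j hj (by omega), le_div_iff₀ (by norm_num)]
    linarith [h.two_le_dist_low_low hj hji hin]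

theorem elim_high_eq (h : SortingGadget n p v)
    (hel : ElimSpec (fun i j => dist (p i) (p j) / (v i + v j)) el) (i : ℕ) :
    1 ≤ i → i ≤ n → el (n + i) = ((1 / (1 + v (n + i)) : ℝ) : EReal) := by
  induction i using Nat.strong_induction_on with
  | _ i ih =>
  intro hi hin
  have hv := h.one_lt_high_rate i hi hin
  have hself : dist (p (n + i)) (p i) / (v (n + i) + v i) = 1 / (1 + v (n + i)) := by
    rw [h.dist_high_low_self hi hin, h.low_rate i hi hin, add_comm]
  apply le_antisymm
  · rw [← hself]
    refine hel.le_of_touch hi (by omega) (le_trans ?_ (h.one_le_elim_low hel hi hin))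
    rw [hself, EReal.coe_le_coe_iff, div_le_one (by linarith)]
    linarith
  · refine hel.coe_le_of_forall fun j hj hji hcond => ?_
    rcases le_or_gt j n with hjn | hnj
    · rw [h.low_rate j hj hjn, add_comm (v (n + i))]
      exact div_le_div_of_nonneg_right (h.one_le_dist_high_low hi hin hj hjn) (by linarith)
    · obtain ⟨k, rfl⟩ := Nat.exists_eq_add_of_le hnj.le
      have hk : 1 ≤ k := by omega
      have hki : k < i := by omega
      have hkn : k ≤ n := by omega
      rw [ih k hki hk hkn, EReal.coe_le_coe_iff] at hcond
      exact one_div_one_add_le_of_div_le (by linarith)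
        (by linarith [h.one_lt_high_rate k hk hkn]) (h.two_le_dist_high_high hk hki hin) hcond

end SortingGadget

/-- the sorting construction. Disk `i` (for `1 ≤ i ≤ n`) is centered
at `(2i, 0)` with rate `1`; disk `n+i` is centered at `(2i, 1)` with rate
`v_{n+i} > 1`. Then each `D_{n+i}` is eliminated by `D_i` at time
`1/(1 + v_{n+i}) < 1/2`, every `D_i` with `i ≤ n` survives until time `1/2`, and
the elimination order of `D_{n+1}, …, D_{2n}` lists the rates in decreasing
order. (The plane is modelled as `ℂ`.) -/
theorem stmt6 (n : ℕ) (p : ℕ → ℂ) (v : ℕ → ℝ)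
    (hp₁ : ∀ i, 1 ≤ i → i ≤ n → p i = ((2 * i : ℝ) : ℂ))
    (hp₂ : ∀ i, 1 ≤ i → i ≤ n → p (n + i) = ((2 * i : ℝ) : ℂ) + Complex.I)
    (hv₁ : ∀ i, 1 ≤ i → i ≤ n → v i = 1)
    (hv₂ : ∀ i, 1 ≤ i → i ≤ n → 1 < v (n + i))
    (el : ℕ → EReal)
    (hel : ElimSpec (fun i j => dist (p i) (p j) / (v i + v j)) el) :
    (∀ i, 1 ≤ i → i ≤ n →
      el (n + i) = ((1 / (1 + v (n + i)) : ℝ) : EReal) ∧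
      el (n + i) = ((dist (p (n + i)) (p i) / (v (n + i) + v i) : ℝ) : EReal) ∧
      1 / (1 + v (n + i)) < (1 : ℝ) / 2) ∧
    (∀ i, 1 ≤ i → i ≤ n → (((1 : ℝ) / 2 : ℝ) : EReal) ≤ el i) ∧
    (∀ i j, 1 ≤ i → i ≤ n → 1 ≤ j → j ≤ n →
      (el (n + i) < el (n + j) ↔ v (n + j) < v (n + i))) := by
  have hG : SortingGadget n p v := ⟨hp₁, hp₂, hv₁, hv₂⟩
  have helim := hG.elim_high_eq hel
  refine ⟨fun i hi hin => ⟨helim i hi hin, ?_, ?_⟩, fun i hi hin => ?_,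
    fun i j hi hin hj hjn => ?_⟩
  · rw [helim i hi hin, hG.dist_high_low_self hi hin, hv₁ i hi hin, add_comm]
  · exact one_div_lt_one_div_of_lt two_pos (by linarith [hv₂ i hi hin])
  · exact le_trans (EReal.coe_le_coe (by norm_num)) (hG.one_le_elim_low hel hi hin)
  · rw [helim i hi hin, helim j hj hjn, EReal.coe_lt_coe_iff,
      one_div_lt_one_div (by linarith [hv₂ i hi hin]) (by linarith [hv₂ j hj hjn]),
      add_lt_add_iff_left]
end

section
/- With the candidate pair relation defined by |ν|/(4Δ) ≤ |ν'| ≤ 4Δ|ν| and d(ν,ν') ≤ 2(|ν| + |ν'|) on quadtree cells (where |ν| is the diameter of cell ν, p(ν) its parent cell with |p(ν)| = 2|ν|, and d the cell-to-cell distance): if (ν, ν') is a candidate pair and p(ν) ≠ p(ν'), then (p(ν), p(ν')) is a candidate pair. -/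
/-! Passing to the parents doubles both diameters and can only shrink the distance, so each of
the three defining inequalities of a candidate pair survives. -/

/-- The dyadic quadtree cell at level `k` with indices `(a, b)`. -/
def dyCell (k a b : ℕ) : Set (ℝ × ℝ) :=
  Set.Icc ((a : ℝ) / 2 ^ k) ((a + 1 : ℕ) / 2 ^ k) ×ˢ
    Set.Icc ((b : ℝ) / 2 ^ k) ((b + 1 : ℕ) / 2 ^ k)

/-- The distance between two sets: the infimum of pairwise point distances. -/
noncomputable def setDist (s t : Set (ℝ × ℝ)) : ℝ :=
  sInf {d : ℝ | ∃ x ∈ s, ∃ y ∈ t, d = dist x y}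

/-- The candidate pair relation with parameter `Δ`. -/
noncomputable def CandPair (Δ : ℝ) (s t : Set (ℝ × ℝ)) : Prop :=
  Metric.diam s / (4 * Δ) ≤ Metric.diam t ∧
  Metric.diam t ≤ 4 * Δ * Metric.diam s ∧
  setDist s t ≤ 2 * (Metric.diam s + Metric.diam t)

open Bornology Metric Set

lemma Metric.diam_prod {α β : Type*} [PseudoMetricSpace α] [PseudoMetricSpace β]
    {s : Set α} {t : Set β} (hs : IsBounded s) (ht : IsBounded t)
    (hsn : s.Nonempty) (htn : t.Nonempty) :
    diam (s ×ˢ t) = max (diam s) (diam t) := by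
  apply le_antisymm
  · refine diam_le_of_forall_dist_le (le_max_of_le_left diam_nonneg) ?_
    rintro x ⟨hx₁, hx₂⟩ y ⟨hy₁, hy₂⟩
    rw [Prod.dist_eq]
    exact max_le_max (dist_le_diam_of_mem hs hx₁ hy₁) (dist_le_diam_of_mem ht hx₂ hy₂)
  · have hst := hs.prod ht
    obtain ⟨x₀, hx₀⟩ := hsn
    obtain ⟨y₀, hy₀⟩ := htn
    refine max_le (diam_le_of_forall_dist_le diam_nonneg fun x hx x' hx' => ?_)
      (diam_le_of_forall_dist_le diam_nonneg fun y hy y' hy' => ?_)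
    · simpa using dist_le_diam_of_mem hst (mk_mem_prod hx hy₀) (mk_mem_prod hx' hy₀)
    · simpa using dist_le_diam_of_mem hst (mk_mem_prod hx₀ hy) (mk_mem_prod hx₀ hy')

lemma setDist_le_setDist_of_subset {s t s' t' : Set (ℝ × ℝ)} (hs : s ⊆ s') (ht : t ⊆ t')
    (hsn : s.Nonempty) (htn : t.Nonempty) : setDist s' t' ≤ setDist s t := by
  obtain ⟨x, hx⟩ := hsn
  obtain ⟨y, hy⟩ := htn
  refine csInf_le_csInf ⟨0, ?_⟩ ⟨dist x y, x, hx, y, hy, rfl⟩ ?_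
  · rintro d ⟨x, _, y, _, rfl⟩
    exact dist_nonneg
  · rintro d ⟨x, hx, y, hy, rfl⟩
    exact ⟨x, hs hx, y, ht hy, rfl⟩

lemma CandPair.of_subset_of_diam_eq_two_mul {Δ : ℝ} {s t S T : Set (ℝ × ℝ)}
    (h : CandPair Δ s t) (hs : s ⊆ S) (ht : t ⊆ T) (hsn : s.Nonempty) (htn : t.Nonempty)
    (hS : diam S = 2 * diam s) (hT : diam T = 2 * diam t) : CandPair Δ S T := by
  obtain ⟨h₁, h₂, h₃⟩ := h
  rw [CandPair, hS, hT, mul_div_assoc]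
  refine ⟨by linarith, by linarith, ?_⟩
  calc setDist S T ≤ setDist s t := setDist_le_setDist_of_subset hs ht hsn htn
    _ ≤ 2 * (diam s + diam t) := h₃
    _ ≤ 2 * (2 * diam s + 2 * diam t) := by linarith [diam_nonneg (s := s), diam_nonneg (s := t)]

lemma dyadic_le_succ (k c : ℕ) : (c : ℝ) / 2 ^ k ≤ ((c + 1 : ℕ) : ℝ) / 2 ^ k := by
  gcongr
  exact_mod_cast c.le_succ

lemma dyCell_nonempty (k a b : ℕ) : (dyCell k a b).Nonempty :=
  (nonempty_Icc.2 (dyadic_le_succ k a)).prod (nonempty_Icc.2 (dyadic_le_succ k b))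

lemma diam_dyCell (k a b : ℕ) : diam (dyCell k a b) = 1 / 2 ^ k := by
  have hlen (c : ℕ) : ((c + 1 : ℕ) : ℝ) / 2 ^ k - c / 2 ^ k = 1 / 2 ^ k := by
    push_cast
    ring
  rw [dyCell, diam_prod (isBounded_Icc _ _) (isBounded_Icc _ _) (nonempty_Icc.2 (dyadic_le_succ k a))
    (nonempty_Icc.2 (dyadic_le_succ k b)), Real.diam_Icc (dyadic_le_succ k a),
    Real.diam_Icc (dyadic_le_succ k b), hlen, hlen, max_self]

lemma diam_dyCell_parent {k : ℕ} (hk : 1 ≤ k) (a b : ℕ) :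
    diam (dyCell (k - 1) (a / 2) (b / 2)) = 2 * diam (dyCell k a b) := by
  obtain ⟨j, rfl⟩ : ∃ j, k = j + 1 := ⟨k - 1, by omega⟩
  rw [diam_dyCell, diam_dyCell, Nat.add_sub_cancel, pow_succ]
  field_simp

lemma Icc_dyadic_subset_parent (j c : ℕ) :
    Icc ((c : ℝ) / 2 ^ (j + 1)) ((c + 1 : ℕ) / 2 ^ (j + 1)) ⊆
      Icc (((c / 2 : ℕ) : ℝ) / 2 ^ j) ((c / 2 + 1 : ℕ) / 2 ^ j) := by
  have hhalf (n : ℕ) : (n : ℝ) / 2 ^ (j + 1) = (n / 2 : ℝ) / 2 ^ j := by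
    rw [pow_succ]
    ring
  rw [hhalf, hhalf]
  apply Icc_subset_Icc
  · gcongr
    exact Nat.cast_div_le
  · gcongr
    rw [div_le_iff₀ two_pos]
    exact_mod_cast (by omega : c + 1 ≤ (c / 2 + 1) * 2)

lemma dyCell_subset_parent {k : ℕ} (hk : 1 ≤ k) (a b : ℕ) :
    dyCell k a b ⊆ dyCell (k - 1) (a / 2) (b / 2) := by
  obtain ⟨j, rfl⟩ : ∃ j, k = j + 1 := ⟨k - 1, by omega⟩
  rw [Nat.add_sub_cancel]
  exact prod_mono (Icc_dyadic_subset_parent j a) (Icc_dyadic_subset_parent j b)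

theorem stmt9_general (Δ : ℝ) (k a b k' a' b' : ℕ)
    (hk : 1 ≤ k) (hk' : 1 ≤ k')
    (hcand : CandPair Δ (dyCell k a b) (dyCell k' a' b')) :
    CandPair Δ (dyCell (k - 1) (a / 2) (b / 2))
      (dyCell (k' - 1) (a' / 2) (b' / 2)) :=
  hcand.of_subset_of_diam_eq_two_mul (dyCell_subset_parent hk a b) (dyCell_subset_parent hk' a' b')
    (dyCell_nonempty k a b) (dyCell_nonempty k' a' b') (diam_dyCell_parent hk a b)
    (diam_dyCell_parent hk' a' b')

/-- if `(ν, ν')` is a candidate pair of dyadic cells and their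
parent cells differ, then the parents `(p(ν), p(ν'))` form a candidate pair.
The parent of the level-`k` cell with indices `(a,b)` is the level-`(k−1)` cell
with indices `(a/2, b/2)` (natural-number division). -/
theorem stmt9 (Δ : ℝ) (hΔ : 1 ≤ Δ) (k a b k' a' b' : ℕ)
    (hk : 1 ≤ k) (hk' : 1 ≤ k')
    (hpar : (k - 1, a / 2, b / 2) ≠ (k' - 1, a' / 2, b' / 2))
    (hcand : CandPair Δ (dyCell k a b) (dyCell k' a' b')) :
    CandPair Δ (dyCell (k - 1) (a / 2) (b / 2))
      (dyCell (k' - 1) (a' / 2) (b' / 2)) :=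
  stmt9_general Δ k a b k' a' b' hk hk' hcand
end
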